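/- arXiv:2405.02952 — 3 statements merged into one kernel-verified Lean document; each statement's English description precedes it below -/
import Mathlib

section
/- Let f, f̂ : ℝ^d → ℝ be differentiable at θ and let v be a random vector in ℝ^d whose scalar components v_i are independent with zero mean and unit variance. Then the control variate forward gradient h_v(θ) = (∇f(θ)·v)v − (∇f̂(θ)·v)v + ∇f̂(θ) is an unbiased estimator of ∇f(θ), i.e. E[h_v(θ)] = ∇f(θ). -/
open MeasureTheory ProbabilityTheory
open scoped RealInnerProductSpace

/-!
The integrand is `⟪∇f - ∇f̂, v⟫ • v + ∇f̂`, and `𝔼[⟪w, v⟫ • v] = 𝔼[v vᵀ] w = w` because independent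
components with zero mean and unit variance have the identity as second-moment matrix.
-/

section

variable {Ω ι : Type*} [MeasurableSpace Ω] {μ : Measure Ω}

lemma integral_mul_eq_ite_of_iIndepFun [IsProbabilityMeasure μ] [DecidableEq ι]
    {X : ι → Ω → ℝ} (hindep : iIndepFun X μ) (hL2 : ∀ i, MemLp (X i) 2 μ)
    (hmean : ∀ i, ∫ ω, X i ω ∂μ = 0) (hvar : ∀ i, ∫ ω, X i ω ^ 2 ∂μ = 1) (i j : ι) :
    ∫ ω, X i ω * X j ω ∂μ = if i = j then 1 else 0 := by
  split_ifs with hij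
  · subst hij
    simpa only [sq] using hvar i
  · have := (hindep.indepFun hij).integral_mul_eq_mul_integral
      (hL2 i).aestronglyMeasurable (hL2 j).aestronglyMeasurable
    simpa only [Pi.mul_apply, hmean, mul_zero] using this

variable [Fintype ι] {v : Ω → EuclideanSpace ℝ ι}

lemma inner_smul_self_apply (w x : EuclideanSpace ℝ ι) (k : ι) :
    (⟪w, x⟫ • x) k = ∑ j, w j * (x j * x k) := by
  simp only [PiLp.smul_apply, smul_eq_mul, PiLp.inner_apply, RCLike.inner_apply, conj_trivial,
    Finset.sum_mul]
  exact Finset.sum_congr rfl fun j _ => by ring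

lemma integrable_inner_smul (hint : ∀ i j, Integrable (fun ω => v ω i * v ω j) μ)
    (w : EuclideanSpace ℝ ι) : Integrable (fun ω => ⟪w, v ω⟫ • v ω) μ := by
  refine Integrable.of_eval_piLp fun k => ?_
  simp only [inner_smul_self_apply]
  exact integrable_finsetSum _ fun j _ => (hint j k).const_mul _

lemma integral_inner_smul_eq_self [DecidableEq ι]
    (hint : ∀ i j, Integrable (fun ω => v ω i * v ω j) μ)
    (hcov : ∀ i j, ∫ ω, v ω i * v ω j ∂μ = if i = j then 1 else 0) (w : EuclideanSpace ℝ ι) :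
    ∫ ω, ⟪w, v ω⟫ • v ω ∂μ = w := by
  ext k
  rw [eval_integral_piLp (Integrable.eval_piLp (integrable_inner_smul hint w))]
  simp only [inner_smul_self_apply]
  rw [integral_finsetSum _ fun j _ => (hint j k).const_mul _]
  simp [integral_const_mul, hcov]

end

theorem cv_forward_gradient_unbiased_general
    {Ω : Type*} [MeasurableSpace Ω] {μ : Measure Ω} [IsProbabilityMeasure μ]
    {d : ℕ} (f fhat : EuclideanSpace ℝ (Fin d) → ℝ) (θ : EuclideanSpace ℝ (Fin d))
    (v : Ω → EuclideanSpace ℝ (Fin d))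
    (hindep : iIndepFun (fun i ω => v ω i) μ)
    (hL2 : ∀ i, MemLp (fun ω => v ω i) 2 μ)
    (hmean : ∀ i, ∫ ω, v ω i ∂μ = 0)
    (hvar : ∀ i, ∫ ω, (v ω i) ^ 2 ∂μ = 1) :
    ∫ ω, (⟪gradient f θ, v ω⟫ • v ω - ⟪gradient fhat θ, v ω⟫ • v ω + gradient fhat θ) ∂μ
      = gradient f θ := by
  set g := gradient f θ
  set ĝ := gradient fhat θ
  have hint : ∀ i j, Integrable (fun ω => v ω i * v ω j) μ :=
    fun i j => (hL2 i).integrable_mul (hL2 j)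
  have hcov := integral_mul_eq_ite_of_iIndepFun hindep hL2 hmean hvar
  calc ∫ ω, (⟪g, v ω⟫ • v ω - ⟪ĝ, v ω⟫ • v ω + ĝ) ∂μ
      = ∫ ω, (⟪g - ĝ, v ω⟫ • v ω + ĝ) ∂μ := by simp only [inner_sub_left, sub_smul]
    _ = (g - ĝ) + ĝ := by
      rw [integral_add (integrable_inner_smul hint _) (integrable_const ĝ),
        integral_inner_smul_eq_self hint hcov, integral_const, probReal_univ, one_smul]
    _ = g := sub_add_cancel g ĝ

/-- **Unbiasedness of the control variate forward gradient.**
If the components of `v` are independent with zero mean and unit variance, then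
`h_v(θ) = (∇f(θ)·v)v − (∇f̂(θ)·v)v + ∇f̂(θ)` is an unbiased estimator of `∇f(θ)`. -/
theorem cv_forward_gradient_unbiased
    {Ω : Type*} [MeasurableSpace Ω] {μ : Measure Ω} [IsProbabilityMeasure μ]
    {d : ℕ} (f fhat : EuclideanSpace ℝ (Fin d) → ℝ) (θ : EuclideanSpace ℝ (Fin d))
    (hf : DifferentiableAt ℝ f θ) (hfhat : DifferentiableAt ℝ fhat θ)
    (v : Ω → EuclideanSpace ℝ (Fin d)) (hmeas : Measurable v)
    (hindep : iIndepFun (fun i ω => v ω i) μ)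
    (hL2 : ∀ i, MemLp (fun ω => v ω i) 2 μ)
    (hmean : ∀ i, ∫ ω, v ω i ∂μ = 0)
    (hvar : ∀ i, ∫ ω, (v ω i) ^ 2 ∂μ = 1) :
    ∫ ω, (⟪gradient f θ, v ω⟫ • v ω - ⟪gradient fhat θ, v ω⟫ • v ω + gradient fhat θ) ∂μ
      = gradient f θ :=
  cv_forward_gradient_unbiased_general f fhat θ v hindep hL2 hmean hvar
end

section
/- Let f, f̂ : ℝ^d → ℝ be differentiable at θ and let v be a random vector in ℝ^d whose components v_i are independent Rademacher variables, i.e. P(v_i = 1) = P(v_i = -1) = 1/2 for all i. Then the mean squared deviation of the control variate forward gradient satisfies E[‖h_v(θ) − ∇f(θ)‖²] = (d − 1)‖∇f(θ) − ∇f̂(θ)‖². -/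
open MeasureTheory ProbabilityTheory
open scoped RealInnerProductSpace

/-!
Put `u = ∇f(θ) − ∇f̂(θ)`. Then `h_v(θ) − ∇f(θ) = ⟪u, v⟫ v − u`, and expanding the square gives
`‖⟪u, v⟫ v − u‖² = (‖v‖² − 2) ⟪u, v⟫² + ‖u‖²`. A Rademacher vector has `‖v‖² = d` almost surely,
and its coordinates are uncorrelated with unit second moments, so `E ⟪u, v⟫² = ‖u‖²`. Hence the
expectation is `(d − 2) ‖u‖² + ‖u‖² = (d − 1) ‖u‖²`.
-/

theorem norm_inner_smul_sub_sq {E : Type*} [NormedAddCommGroup E] [InnerProductSpace ℝ E]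
    (u x : E) : ‖⟪u, x⟫ • x - u‖ ^ 2 = (‖x‖ ^ 2 - 2) * ⟪u, x⟫ ^ 2 + ‖u‖ ^ 2 := by
  rw [norm_sub_sq_real, norm_smul, real_inner_smul_left, mul_pow, Real.norm_eq_abs, sq_abs,
    real_inner_comm x u]
  ring

theorem EuclideanSpace.real_inner_sq_eq_sum_sum {ι : Type*} [Fintype ι]
    (u x : EuclideanSpace ℝ ι) : ⟪u, x⟫ ^ 2 = ∑ i, ∑ j, u i * u j * (x i * x j) := by
  simp only [PiLp.inner_apply, RCLike.inner_apply, conj_trivial, sq, Finset.sum_mul_sum]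
  exact Finset.sum_congr rfl fun i _ => Finset.sum_congr rfl fun j _ => by ring

section Moments

variable {Ω : Type*} [MeasurableSpace Ω] {μ : Measure Ω}

section Isotropic

variable {ι : Type*} [Fintype ι] {v : Ω → EuclideanSpace ℝ ι}

theorem integrable_inner_sq (hint : ∀ i j, Integrable (fun ω => v ω i * v ω j) μ)
    (u : EuclideanSpace ℝ ι) : Integrable (fun ω => ⟪u, v ω⟫ ^ 2) μ := by
  simp_rw [EuclideanSpace.real_inner_sq_eq_sum_sum]
  exact integrable_finsetSum _ fun i _ => integrable_finsetSum _ fun j _ => (hint i j).const_mul _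

theorem integral_inner_sq_eq_norm_sq [DecidableEq ι]
    (hint : ∀ i j, Integrable (fun ω => v ω i * v ω j) μ)
    (hcov : ∀ i j, ∫ ω, v ω i * v ω j ∂μ = if i = j then 1 else 0) (u : EuclideanSpace ℝ ι) :
    ∫ ω, ⟪u, v ω⟫ ^ 2 ∂μ = ‖u‖ ^ 2 := by
  simp_rw [EuclideanSpace.real_norm_sq_eq, EuclideanSpace.real_inner_sq_eq_sum_sum]
  rw [integral_finsetSum _ fun i _ => integrable_finsetSum _ fun j _ => (hint i j).const_mul _]
  simp_rw [integral_finsetSum _ fun j _ => (hint _ j).const_mul _, integral_const_mul, hcov]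
  simp [sq]

theorem integral_norm_inner_smul_sub_sq [IsProbabilityMeasure μ] [DecidableEq ι]
    (hint : ∀ i j, Integrable (fun ω => v ω i * v ω j) μ)
    (hcov : ∀ i j, ∫ ω, v ω i * v ω j ∂μ = if i = j then 1 else 0)
    (hnorm : ∀ᵐ ω ∂μ, ‖v ω‖ ^ 2 = Fintype.card ι) (u : EuclideanSpace ℝ ι) :
    ∫ ω, ‖⟪u, v ω⟫ • v ω - u‖ ^ 2 ∂μ = (Fintype.card ι - 1) * ‖u‖ ^ 2 := by
  have hpt : (fun ω => ‖⟪u, v ω⟫ • v ω - u‖ ^ 2) =ᵐ[μ]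
      fun ω => (Fintype.card ι - 2) * ⟪u, v ω⟫ ^ 2 + ‖u‖ ^ 2 := by
    filter_upwards [hnorm] with ω hω
    rw [norm_inner_smul_sub_sq, hω]
  rw [integral_congr_ae hpt, integral_add ((integrable_inner_sq hint u).const_mul _)
    (integrable_const _), integral_const_mul, integral_inner_sq_eq_norm_sq hint hcov,
    integral_const, probReal_univ, one_smul]
  ring

end Isotropic

def IsRademacher (X : Ω → ℝ) (μ : Measure Ω) : Prop :=
  μ {ω | X ω = 1} = 1 / 2 ∧ μ {ω | X ω = -1} = 1 / 2

namespace IsRademacher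

variable [IsProbabilityMeasure μ] {X Y : Ω → ℝ}

theorem ae_eq_one_or_eq_neg_one (h : IsRademacher X μ) (hX : Measurable X) :
    ∀ᵐ ω ∂μ, X ω = 1 ∨ X ω = -1 := by
  have hdisj : Disjoint {ω | X ω = 1} {ω | X ω = -1} :=
    Set.disjoint_left.2 fun ω (h1 : X ω = 1) (h2 : X ω = -1) => by norm_num [h1] at h2
  have hA : MeasurableSet {ω | X ω = 1} := hX (measurableSet_singleton _)
  have hB : MeasurableSet {ω | X ω = -1} := hX (measurableSet_singleton _)
  change {ω | X ω = 1} ∪ {ω | X ω = -1} ∈ ae μ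
  rw [mem_ae_iff_prob_eq_one (hA.union hB), measure_union hdisj hB, h.1, h.2, ENNReal.add_halves]

theorem ae_sq_eq_one (h : IsRademacher X μ) (hX : Measurable X) : ∀ᵐ ω ∂μ, X ω ^ 2 = 1 := by
  filter_upwards [h.ae_eq_one_or_eq_neg_one hX] with ω hω
  rcases hω with hω | hω <;> simp [hω]

theorem integrable_mul (hX' : IsRademacher X μ) (hX : Measurable X) (hY' : IsRademacher Y μ)
    (hY : Measurable Y) : Integrable (X * Y) μ := by
  refine .of_bound (hX.mul hY).aestronglyMeasurable 1 ?_
  filter_upwards [hX'.ae_eq_one_or_eq_neg_one hX, hY'.ae_eq_one_or_eq_neg_one hY] with ω h1 h2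
  rcases h1 with h1 | h1 <;> rcases h2 with h2 | h2 <;> simp [h1, h2]

theorem integral_eq_zero (h : IsRademacher X μ) (hX : Measurable X) : ∫ ω, X ω ∂μ = 0 := by
  have hA : MeasurableSet {ω | X ω = 1} := hX (measurableSet_singleton 1)
  have hB : MeasurableSet {ω | X ω = -1} := hX (measurableSet_singleton (-1))
  have heq : X =ᵐ[μ] fun ω => {ω | X ω = 1}.indicator 1 ω - {ω | X ω = -1}.indicator 1 ω := by
    filter_upwards [h.ae_eq_one_or_eq_neg_one hX] with ω hω
    rcases hω with hω | hω <;> norm_num [Set.indicator_apply, hω]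
  rw [integral_congr_ae heq, integral_sub ((integrable_const 1).indicator hA)
      ((integrable_const 1).indicator hB), integral_indicator_one hA, integral_indicator_one hB,
    measureReal_def, measureReal_def, h.1, h.2, sub_self]

end IsRademacher

section RademacherVector

variable [IsProbabilityMeasure μ] {ι : Type*} {v : Ω → EuclideanSpace ℝ ι}

theorem integrable_coord_mul_coord_of_isRademacher (hmeas : Measurable v)
    (hrad : ∀ i, IsRademacher (fun ω => v ω i) μ) (i j : ι) :
    Integrable (fun ω => v ω i * v ω j) μ :=
  (hrad i).integrable_mul (by fun_prop) (hrad j) (by fun_prop)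

theorem integral_coord_mul_coord_of_isRademacher [Fintype ι] [DecidableEq ι] (hmeas : Measurable v)
    (hindep : iIndepFun (fun i ω => v ω i) μ) (hrad : ∀ i, IsRademacher (fun ω => v ω i) μ)
    (i j : ι) : ∫ ω, v ω i * v ω j ∂μ = if i = j then 1 else 0 := by
  split_ifs with hij
  · subst hij
    have hsq : (fun ω => v ω i * v ω i) =ᵐ[μ] fun _ => 1 := by
      filter_upwards [(hrad i).ae_sq_eq_one (by fun_prop)] with ω hω
      rwa [← sq]
    simp [integral_congr_ae hsq]
  · rw [(hindep.indepFun hij).integral_fun_mul_eq_mul_integral (by fun_prop) (by fun_prop),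
      (hrad i).integral_eq_zero (by fun_prop), zero_mul]

theorem ae_norm_sq_eq_card_of_isRademacher [Fintype ι] (hmeas : Measurable v)
    (hrad : ∀ i, IsRademacher (fun ω => v ω i) μ) :
    ∀ᵐ ω ∂μ, ‖v ω‖ ^ 2 = Fintype.card ι := by
  filter_upwards [ae_all_iff.2 fun i => (hrad i).ae_sq_eq_one (by fun_prop)] with ω hω
  simp [EuclideanSpace.real_norm_sq_eq, hω]

end RademacherVector

end Moments

theorem cv_forward_gradient_mse_rademacher_general
    {Ω : Type*} [MeasurableSpace Ω] {μ : Measure Ω} [IsProbabilityMeasure μ]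
    {d : ℕ} (f fhat : EuclideanSpace ℝ (Fin d) → ℝ) (θ : EuclideanSpace ℝ (Fin d))
    (v : Ω → EuclideanSpace ℝ (Fin d)) (hmeas : Measurable v)
    (hindep : iIndepFun (fun i ω => v ω i) μ)
    (hrad : ∀ i, μ {ω | v ω i = 1} = 1/2 ∧ μ {ω | v ω i = -1} = 1/2) :
    ∫ ω, ‖(⟪gradient f θ, v ω⟫ • v ω - ⟪gradient fhat θ, v ω⟫ • v ω + gradient fhat θ)
          - gradient f θ‖ ^ 2 ∂μ
      = ((d : ℝ) - 1) * ‖gradient f θ - gradient fhat θ‖ ^ 2 := by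
  have hcv : ∀ ω, (⟪gradient f θ, v ω⟫ • v ω - ⟪gradient fhat θ, v ω⟫ • v ω + gradient fhat θ)
      - gradient f θ = ⟪gradient f θ - gradient fhat θ, v ω⟫ • v ω
        - (gradient f θ - gradient fhat θ) := fun ω => by
    rw [inner_sub_left, sub_smul]
    abel
  simp_rw [hcv]
  simpa using integral_norm_inner_smul_sub_sq
    (integrable_coord_mul_coord_of_isRademacher hmeas hrad)
    (integral_coord_mul_coord_of_isRademacher hmeas hindep hrad)
    (ae_norm_sq_eq_card_of_isRademacher hmeas hrad) (gradient f θ - gradient fhat θ)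

/-- **Variance of the control variate forward gradient for Rademacher directions.**
If the components of `v` are independent Rademacher variables, then the mean squared
deviation of `h_v(θ) = (∇f(θ)·v)v − (∇f̂(θ)·v)v + ∇f̂(θ)` from `∇f(θ)` equals
`(d - 1) ‖∇f(θ) − ∇f̂(θ)‖²`. -/
theorem cv_forward_gradient_mse_rademacher
    {Ω : Type*} [MeasurableSpace Ω] {μ : Measure Ω} [IsProbabilityMeasure μ]
    {d : ℕ} (f fhat : EuclideanSpace ℝ (Fin d) → ℝ) (θ : EuclideanSpace ℝ (Fin d))
    (hf : DifferentiableAt ℝ f θ) (hfhat : DifferentiableAt ℝ fhat θ)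
    (v : Ω → EuclideanSpace ℝ (Fin d)) (hmeas : Measurable v)
    (hindep : iIndepFun (fun i ω => v ω i) μ)
    (hrad : ∀ i, μ {ω | v ω i = 1} = 1/2 ∧ μ {ω | v ω i = -1} = 1/2) :
    ∫ ω, ‖(⟪gradient f θ, v ω⟫ • v ω - ⟪gradient fhat θ, v ω⟫ • v ω + gradient fhat θ)
          - gradient f θ‖ ^ 2 ∂μ
      = ((d : ℝ) - 1) * ‖gradient f θ - gradient fhat θ‖ ^ 2 :=
  cv_forward_gradient_mse_rademacher_general f fhat θ v hmeas hindep hrad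
end

section
/- Let f : ℝ^d → ℝ be differentiable at θ and let v be a random vector in ℝ^d whose scalar components v_i are independent with zero mean and unit variance. Then the second moment of the i-th component of the forward gradient g_v(θ) = (∇f(θ)·v)v satisfies E[(g_v(θ))_i²] = (∂f/∂θ_i(θ))² · Var[v_i²] + ‖∇f(θ)‖² for each i = 1, ..., d. -/
/-!
Write `g = ∇f(θ)`, so that `(g_v(θ))_i² = ∑_{j,k} g_j g_k v_j v_k v_i²`. By independence and
zero means, `E[v_j v_k v_i²] = 0` for `j ≠ k`, while `E[v_j² v_i²] = 1` for `j ≠ i`. Hence the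
second moment is `∑_{j ≠ i} g_j² + g_i² E[v_i⁴] = ‖g‖² + g_i² (E[v_i⁴] - 1)`, and
`E[v_i⁴] - 1 = Var[v_i²]`.
-/

open MeasureTheory ProbabilityTheory Finset
open scoped RealInnerProductSpace

instance ENNReal.HolderTriple.instFourFourTwo : ENNReal.HolderTriple 4 4 2 where
  inv_add_inv_eq_inv := by
    rw [← two_mul, show (4 : ENNReal) = 2 * 2 by norm_num, ENNReal.mul_inv (by simp) (by simp),
      ← mul_assoc, ENNReal.mul_inv_cancel (by simp) (by simp), one_mul]

section Moments

variable {Ω ι : Type*} [MeasurableSpace Ω] {μ : Measure Ω} {X : ι → Ω → ℝ}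

namespace MeasureTheory

lemma integrable_mul_mul_sq_of_memLp_four (hX : ∀ i, MemLp (X i) 4 μ) (j k i : ι) :
    Integrable (fun ω => X j ω * X k ω * X i ω ^ 2) μ := by
  simp only [sq]
  exact ((hX k).mul (r := 2) (hX j)).integrable_mul ((hX i).mul (r := 2) (hX i))

lemma integral_sq_sum_mul_eq_sum_sum [Fintype ι] (hX : ∀ i, MemLp (X i) 4 μ) (g : ι → ℝ)
    (i : ι) :
    ∫ ω, ((∑ j, g j * X j ω) * X i ω) ^ 2 ∂μ
      = ∑ j, ∑ k, g j * g k * ∫ ω, X j ω * X k ω * X i ω ^ 2 ∂μ := by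
  have hterm := integrable_mul_mul_sq_of_memLp_four hX
  have hexpand : ∀ ω, ((∑ j, g j * X j ω) * X i ω) ^ 2
      = ∑ j, ∑ k, g j * g k * (X j ω * X k ω * X i ω ^ 2) := fun ω => by
    rw [mul_pow, sq, sum_mul_sum, sum_mul]
    refine sum_congr rfl fun j _ => ?_
    rw [sum_mul]
    exact sum_congr rfl fun k _ => by ring
  simp_rw [hexpand]
  rw [integral_finsetSum _ fun j _ => integrable_finsetSum _ fun k _ =>
    (hterm j k i).const_mul _]
  refine sum_congr rfl fun j _ => ?_
  rw [integral_finsetSum _ fun k _ => (hterm j k i).const_mul _]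
  exact sum_congr rfl fun k _ => integral_const_mul _ _

end MeasureTheory

namespace ProbabilityTheory

lemma iIndepFun.integral_mul_mul_sq_of_ne (h : iIndepFun X μ) (hX : ∀ i, AEMeasurable (X i) μ)
    (hmean : ∀ i, ∫ ω, X i ω ∂μ = 0) {j k : ι} (hjk : j ≠ k) (i : ι) :
    ∫ ω, X j ω * X k ω * X i ω ^ 2 ∂μ = 0 := by
  -- One of `j`, `k` differs from `i`; that centred factor is independent of the other two.
  wlog hji : j ≠ i generalizing j k
  · simpa only [mul_comm (X j _)] using this hjk.symm (not_not.mp hji ▸ hjk.symm)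
  have hindep : IndepFun (fun ω => X k ω * X i ω ^ 2) (X j) μ :=
    (h.indepFun_prodMk₀ hX k i j hjk.symm hji.symm).comp
      (measurable_fst.mul (measurable_snd.pow_const 2)) measurable_id
  calc ∫ ω, X j ω * X k ω * X i ω ^ 2 ∂μ
      = ∫ ω, ((fun ω => X k ω * X i ω ^ 2) * X j) ω ∂μ := by
        congr 1
        ext ω
        simp only [Pi.mul_apply]
        ring
    _ = (∫ ω, X k ω * X i ω ^ 2 ∂μ) * ∫ ω, X j ω ∂μ :=
      hindep.integral_mul_eq_mul_integral
        ((hX k).mul ((hX i).pow_const 2)).aestronglyMeasurable (hX j).aestronglyMeasurable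
    _ = 0 := by rw [hmean j, mul_zero]

lemma iIndepFun.integral_sq_mul_sq_of_ne (h : iIndepFun X μ) (hX : ∀ i, AEMeasurable (X i) μ)
    {j i : ι} (hji : j ≠ i) :
    ∫ ω, X j ω ^ 2 * X i ω ^ 2 ∂μ = (∫ ω, X j ω ^ 2 ∂μ) * ∫ ω, X i ω ^ 2 ∂μ :=
  ((h.indepFun hji).comp (measurable_id.pow_const 2)
    (measurable_id.pow_const 2)).integral_mul_eq_mul_integral
    ((hX j).pow_const 2).aestronglyMeasurable ((hX i).pow_const 2).aestronglyMeasurable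

theorem iIndepFun.integral_sq_sum_mul [Fintype ι] [IsProbabilityMeasure μ] (h : iIndepFun X μ)
    (hX : ∀ i, MemLp (X i) 4 μ) (hmean : ∀ i, ∫ ω, X i ω ∂μ = 0)
    (hvar : ∀ i, ∫ ω, X i ω ^ 2 ∂μ = 1) (g : ι → ℝ) (i : ι) :
    ∫ ω, ((∑ j, g j * X j ω) * X i ω) ^ 2 ∂μ
      = g i ^ 2 * variance (fun ω => X i ω ^ 2) μ + ∑ j, g j ^ 2 := by
  have hXm : ∀ j, AEMeasurable (X j) μ := fun j => (hX j).aestronglyMeasurable.aemeasurable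
  have hdiag : ∀ j, ∑ k, g j * g k * ∫ ω, X j ω * X k ω * X i ω ^ 2 ∂μ
      = g j ^ 2 * ∫ ω, X j ω * X j ω * X i ω ^ 2 ∂μ := fun j => by
    rw [sum_eq_single j (fun k _ hkj => by
      rw [h.integral_mul_mul_sq_of_ne hXm hmean hkj.symm, mul_zero]) (by simp)]
    ring
  have hoff : ∀ j ≠ i, ∫ ω, X j ω * X j ω * X i ω ^ 2 ∂μ = 1 := fun j hji => by
    simp only [← sq, h.integral_sq_mul_sq_of_ne hXm hji, hvar, one_pow]
  have hvariance :
      variance (fun ω => X i ω ^ 2) μ = ∫ ω, X i ω * X i ω * X i ω ^ 2 ∂μ - 1 := by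
    have hsq : MemLp (fun ω => X i ω ^ 2) 2 μ := by
      simp only [sq]
      exact (hX i).mul (r := 2) (hX i)
    simp only [variance_eq_sub hsq, hvar, Pi.pow_apply, ← sq, one_pow]
  calc ∫ ω, ((∑ j, g j * X j ω) * X i ω) ^ 2 ∂μ
      = ∑ j, g j ^ 2 * (∫ ω, X j ω * X j ω * X i ω ^ 2 ∂μ - 1) + ∑ j, g j ^ 2 := by
        rw [integral_sq_sum_mul_eq_sum_sum hX, ← sum_add_distrib]
        exact sum_congr rfl fun j _ => (hdiag j).trans (by ring)
    _ = g i ^ 2 * variance (fun ω => X i ω ^ 2) μ + ∑ j, g j ^ 2 := by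
        rw [sum_eq_single i (fun j _ hji => by rw [hoff j hji, sub_self, mul_zero]) (by simp),
          hvariance]

end ProbabilityTheory

end Moments

theorem forward_gradient_component_second_moment_general
    {Ω : Type*} [MeasurableSpace Ω] {μ : Measure Ω} [IsProbabilityMeasure μ]
    {d : ℕ} (f : EuclideanSpace ℝ (Fin d) → ℝ) (θ : EuclideanSpace ℝ (Fin d))
    (v : Ω → EuclideanSpace ℝ (Fin d))
    (hindep : iIndepFun (fun i ω => v ω i) μ)
    (hL4 : ∀ i, MemLp (fun ω => v ω i) 4 μ)
    (hmean : ∀ i, ∫ ω, v ω i ∂μ = 0)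
    (hvar : ∀ i, ∫ ω, (v ω i) ^ 2 ∂μ = 1) :
    ∀ i : Fin d,
      ∫ ω, (⟪gradient f θ, v ω⟫ * v ω i) ^ 2 ∂μ
        = (gradient f θ i) ^ 2 * variance (fun ω => (v ω i) ^ 2) μ
          + ‖gradient f θ‖ ^ 2 := by
  intro i
  simpa only [PiLp.inner_apply, RCLike.inner_apply, conj_trivial, mul_comm (v _ _),
    EuclideanSpace.real_norm_sq_eq]
    using hindep.integral_sq_sum_mul hL4 hmean hvar (fun j => gradient f θ j) i

/-- **Second moment of a component of the forward gradient.**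
If the components of `v` are independent with zero mean and unit variance, then for each
`i`, `E[(g_v(θ))_i²] = (∂f/∂θ_i(θ))² Var[v_i²] + ‖∇f(θ)‖²`, where
`(g_v(θ))_i = (∇f(θ)·v) v_i`. -/
theorem forward_gradient_component_second_moment
    {Ω : Type*} [MeasurableSpace Ω] {μ : Measure Ω} [IsProbabilityMeasure μ]
    {d : ℕ} (f : EuclideanSpace ℝ (Fin d) → ℝ) (θ : EuclideanSpace ℝ (Fin d))
    (hf : DifferentiableAt ℝ f θ)
    (v : Ω → EuclideanSpace ℝ (Fin d)) (hmeas : Measurable v)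
    (hindep : iIndepFun (fun i ω => v ω i) μ)
    (hL4 : ∀ i, MemLp (fun ω => v ω i) 4 μ)
    (hmean : ∀ i, ∫ ω, v ω i ∂μ = 0)
    (hvar : ∀ i, ∫ ω, (v ω i) ^ 2 ∂μ = 1) :
    ∀ i : Fin d,
      ∫ ω, (⟪gradient f θ, v ω⟫ * v ω i) ^ 2 ∂μ
        = (gradient f θ i) ^ 2 * variance (fun ω => (v ω i) ^ 2) μ
          + ‖gradient f θ‖ ^ 2 :=
  forward_gradient_component_second_moment_general f θ v hindep hL4 hmean hvar
end
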